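/- arXiv:math/0405522 — 2 statements merged into one kernel-verified Lean document; each statement's English description precedes it below -/
import Mathlib

section
/- Let X be a compact metric space, f : X → X a continuous finite-to-one map, and ν a Borel probability measure on X. Suppose that for every Borel set A with ν(A) = 0 one has ν(f^{-1}(A)) = 0. Let L be the transfer operator Lψ(z) = Σ_{f(z')=z} exp(φ(z'))ψ(z') for a continuous function φ, and suppose L*ν = ν. If ψ_n → ψ ν-almost everywhere (Borel measurable functions), then Lψ_n → Lψ ν-almost everywhere. -/
/-!
Since `L*ν = ν`, a Urysohn function `g` equal to `1` on a closed set `F` and supported in an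
open set `U` gives `c ν(f F) ≤ ∫ Lg dν = ∫ g dν ≤ ν(U)`, where `c > 0` is a lower bound of
`exp φ`. Exhausting open sets by closed ones and using outer regularity, `c ν(f A) ≤ ν(A)` for
every set `A`; in particular `f` maps the null set where `ψₙ ↛ ψ` to a null set. Off that image,
every preimage of `z` is a point of convergence, so the finite sum `Lψₙ(z)` converges to `Lψ(z)`.
-/

open MeasureTheory Filter

noncomputable section

/-- The transfer operator `(Lψ)(z) = Σ_{f(z')=z} exp(φ(z')) ψ(z')` of a
finite-to-one map `f` with potential `φ`, acting on Borel measurable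
functions. -/
def transferOp {X : Type*} (f : X → X) (hfin : ∀ z, (f ⁻¹' {z}).Finite)
    (φ : X → ℝ) (ψ : X → ℝ) : X → ℝ :=
  fun z => ∑ z' ∈ (hfin z).toFinset, Real.exp (φ z') * ψ z'

open Set

section TransferOp

variable {X : Type*} {f : X → X} (hfin : ∀ z, (f ⁻¹' {z}).Finite) (φ : X → ℝ)

lemma transferOp_add (ψ₁ ψ₂ : X → ℝ) :
    transferOp f hfin φ (ψ₁ + ψ₂) = transferOp f hfin φ ψ₁ + transferOp f hfin φ ψ₂ := by
  funext z
  simp only [transferOp, Pi.add_apply, mul_add, Finset.sum_add_distrib]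

lemma transferOp_nonneg {ψ : X → ℝ} (hψ : 0 ≤ ψ) : 0 ≤ transferOp f hfin φ ψ := fun _ =>
  Finset.sum_nonneg fun x _ => mul_nonneg (Real.exp_pos _).le (hψ x)

lemma exp_mul_le_transferOp_apply {ψ : X → ℝ} (hψ : 0 ≤ ψ) (x : X) :
    Real.exp (φ x) * ψ x ≤ transferOp f hfin φ ψ (f x) :=
  Finset.single_le_sum (f := fun y => Real.exp (φ y) * ψ y)
    (fun y _ => mul_nonneg (Real.exp_pos _).le (hψ y)) ((hfin (f x)).mem_toFinset.mpr rfl)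

lemma tendsto_transferOp_apply {ψ : X → ℝ} {ψn : ℕ → X → ℝ} {z : X}
    (h : ∀ x, f x = z → Tendsto (fun n => ψn n x) atTop (nhds (ψ x))) :
    Tendsto (fun n => transferOp f hfin φ (ψn n) z) atTop (nhds (transferOp f hfin φ ψ z)) :=
  tendsto_finsetSum _ fun x hx => (h x ((hfin z).mem_toFinset.mp hx)).const_mul _

-- `L*ν = ν`, tested against continuous functions.
def IsFixedByTransferDual {X : Type*} [TopologicalSpace X] [MeasurableSpace X] (f : X → X)
    (hfin : ∀ z, (f ⁻¹' {z}).Finite) (φ : X → ℝ) (ν : Measure X) : Prop :=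
  ∀ ψ : X → ℝ, Continuous ψ → ∫ z, transferOp f hfin φ ψ z ∂ν = ∫ z, ψ z ∂ν

end TransferOp

section Measure

variable {X : Type*} [MetricSpace X] [CompactSpace X] [MeasurableSpace X] [BorelSpace X]
  {f : X → X} {hfin : ∀ z, (f ⁻¹' {z}).Finite} {φ : X → ℝ}
  {ν : Measure X} [IsProbabilityMeasure ν]

lemma integrable_transferOp
    (hfix : IsFixedByTransferDual f hfin φ ν)
    {ψ : X → ℝ} (hψ : Continuous ψ) :
    Integrable (transferOp f hfin φ ψ) ν := by
  -- A non-integrable `Lχ` would have integral `0`, contradicting `∫ Lχ dν = ∫ χ dν ≠ 0`.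
  have of_integral_ne_zero (χ : X → ℝ) (hχ : Continuous χ) (hne : ∫ z, χ z ∂ν ≠ 0) :
      Integrable (transferOp f hfin φ χ) ν :=
    by_contra fun h => hne (by rw [← hfix χ hχ, integral_undef h])
  have hψint : Integrable ψ ν :=
    hψ.integrable_of_hasCompactSupport (HasCompactSupport.of_compactSpace _)
  by_cases h0 : ∫ z, ψ z ∂ν = 0
  · have hL1 := of_integral_ne_zero 1 continuous_const (by simp)
    have hLψ1 := of_integral_ne_zero (ψ + 1) (hψ.add continuous_const) (by
      simp only [Pi.add_apply, Pi.one_apply]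
      rw [integral_add hψint (integrable_const 1)]
      simp [h0])
    rw [transferOp_add] at hLψ1
    simpa using hLψ1.sub hL1
  · exact of_integral_ne_zero ψ hψ h0

variable {c : ℝ}

lemma mul_measureReal_image_le
    (hfix : IsFixedByTransferDual f hfin φ ν)
    (hf : Continuous f) (hc : ∀ x, c ≤ Real.exp (φ x))
    {F U : Set X} (hF : IsClosed F) (hU : IsOpen U) (hFU : F ⊆ U) :
    c * ν.real (f '' F) ≤ ν.real U := by
  obtain ⟨g, hg0, hg1, hg01⟩ := exists_continuous_zero_one_of_isClosed hU.isClosed_compl hF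
    (disjoint_compl_left_iff_subset.mpr hFU)
  have hg : 0 ≤ (g : X → ℝ) := fun x => (hg01 x).1
  have hLg := integrable_transferOp hfix g.continuous
  have hfF : MeasurableSet (f '' F) := (hF.isCompact.image hf).isClosed.measurableSet
  have hc_le : ∀ z ∈ f '' F, c ≤ transferOp f hfin φ g z := by
    rintro _ ⟨x, hx, rfl⟩
    have hLg_ge := exp_mul_le_transferOp_apply hfin φ hg x
    rw [hg1 hx, Pi.one_apply, mul_one] at hLg_ge
    exact (hc x).trans hLg_ge
  have hg_le : ∀ z, g z ≤ U.indicator 1 z := fun z => by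
    by_cases hz : z ∈ U
    · simpa [hz] using (hg01 z).2
    · simp [hz, hg0 hz]
  calc c * ν.real (f '' F) ≤ ∫ z in f '' F, transferOp f hfin φ g z ∂ν :=
        setIntegral_ge_of_const_le_real hfF (measure_ne_top _ _) hc_le hLg.integrableOn
    _ ≤ ∫ z, transferOp f hfin φ g z ∂ν :=
        setIntegral_le_integral hLg (ae_of_all _ (transferOp_nonneg hfin φ hg))
    _ = ∫ z, g z ∂ν := hfix g g.continuous
    _ ≤ ∫ z, U.indicator 1 z ∂ν :=
        integral_mono (g.continuous.integrable_of_hasCompactSupport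
          (HasCompactSupport.of_compactSpace _))
          ((integrable_const 1).indicator hU.measurableSet) hg_le
    _ = ν.real U := integral_indicator_one hU.measurableSet

lemma ofReal_mul_measure_image_le_of_isOpen
    (hfix : IsFixedByTransferDual f hfin φ ν)
    (hf : Continuous f) (hc : ∀ x, c ≤ Real.exp (φ x))
    (hc₀ : 0 ≤ c) {U : Set X} (hU : IsOpen U) :
    ENNReal.ofReal c * ν (f '' U) ≤ ν U := by
  obtain ⟨F, hF, hFU, hUF, hmono⟩ := hU.exists_iUnion_isClosed
  have hmono_image : Monotone fun n => f '' F n := fun _ _ hmn => image_mono (hmono hmn)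
  conv_lhs => rw [← hUF, image_iUnion, hmono_image.measure_iUnion, ENNReal.mul_iSup]
  refine iSup_le fun n => ?_
  calc ENNReal.ofReal c * ν (f '' F n) = ENNReal.ofReal (c * ν.real (f '' F n)) := by
        rw [ENNReal.ofReal_mul hc₀, ofReal_measureReal]
    _ ≤ ENNReal.ofReal (ν.real U) :=
        ENNReal.ofReal_le_ofReal (mul_measureReal_image_le hfix hf hc (hF n) hU (hFU n))
    _ = ν U := ofReal_measureReal

lemma ofReal_mul_measure_image_le
    (hfix : IsFixedByTransferDual f hfin φ ν)
    (hf : Continuous f) (hc : ∀ x, c ≤ Real.exp (φ x))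
    (hc₀ : 0 ≤ c) (s : Set X) :
    ENNReal.ofReal c * ν (f '' s) ≤ ν s := by
  rw [s.measure_eq_iInf_isOpen]
  refine le_iInf₂ fun U hsU => le_iInf fun hU => ?_
  calc ENNReal.ofReal c * ν (f '' s) ≤ ENNReal.ofReal c * ν (f '' U) := by
        gcongr
    _ ≤ ν U := ofReal_mul_measure_image_le_of_isOpen hfix hf hc hc₀ hU

lemma measure_image_eq_zero_of_measure_eq_zero (hfix : IsFixedByTransferDual f hfin φ ν)
    (hf : Continuous f) (hφ : Continuous φ) {s : Set X} (hs : ν s = 0) : ν (f '' s) = 0 := by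
  obtain ⟨m, hm⟩ := (isCompact_range hφ).bddBelow
  have hc : ∀ x, Real.exp m ≤ Real.exp (φ x) := fun x => Real.exp_le_exp.mpr (hm ⟨x, rfl⟩)
  have h := ofReal_mul_measure_image_le hfix hf hc (Real.exp_pos m).le s
  rw [hs, nonpos_iff_eq_zero, mul_eq_zero] at h
  exact h.resolve_left (ENNReal.ofReal_pos.mpr (Real.exp_pos m)).ne'

end Measure

theorem transferOp_ae_tendsto_general {X : Type*} [MetricSpace X] [CompactSpace X]
    [MeasurableSpace X] [BorelSpace X]
    (f : X → X) (hf : Continuous f) (hfin : ∀ z, (f ⁻¹' {z}).Finite)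
    (ν : Measure X) [IsProbabilityMeasure ν]
    (φ : X → ℝ) (hφ : Continuous φ)
    (hfix : ∀ ψ : X → ℝ, Continuous ψ →
      ∫ z, transferOp f hfin φ ψ z ∂ν = ∫ z, ψ z ∂ν)
    (ψ : X → ℝ)
    (ψn : ℕ → X → ℝ)
    (hconv : ∀ᵐ z ∂ν, Tendsto (fun n => ψn n z) atTop (nhds (ψ z))) :
    ∀ᵐ z ∂ν, Tendsto (fun n => transferOp f hfin φ (ψn n) z) atTop
      (nhds (transferOp f hfin φ ψ z)) := by
  have hbad : ν (f '' {x | ¬Tendsto (fun n => ψn n x) atTop (nhds (ψ x))}) = 0 :=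
    measure_image_eq_zero_of_measure_eq_zero hfix hf hφ (ae_iff.mp hconv)
  filter_upwards [measure_eq_zero_iff_ae_notMem.mp hbad] with z hz
  exact tendsto_transferOp_apply hfin φ fun x hx => not_not.mp fun hx' => hz ⟨x, hx', hx⟩

/-- If `ν` is backward quasi-invariant (`ν(A) = 0 ⟹ ν(f⁻¹A) = 0`) and
`L*ν = ν`, then the transfer operator preserves `ν`-almost everywhere
convergence of Borel measurable functions. -/
theorem transferOp_ae_tendsto {X : Type*} [MetricSpace X] [CompactSpace X]
    [MeasurableSpace X] [BorelSpace X]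
    (f : X → X) (hf : Continuous f) (hfin : ∀ z, (f ⁻¹' {z}).Finite)
    (ν : Measure X) [IsProbabilityMeasure ν]
    (hnull : ∀ A : Set X, MeasurableSet A → ν A = 0 → ν (f ⁻¹' A) = 0)
    (φ : X → ℝ) (hφ : Continuous φ)
    (hfix : ∀ ψ : X → ℝ, Continuous ψ →
      ∫ z, transferOp f hfin φ ψ z ∂ν = ∫ z, ψ z ∂ν)
    (ψ : X → ℝ) (hψ : Measurable ψ)
    (ψn : ℕ → X → ℝ) (hψn : ∀ n, Measurable (ψn n))
    (hconv : ∀ᵐ z ∂ν, Tendsto (fun n => ψn n z) atTop (nhds (ψ z))) :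
    ∀ᵐ z ∂ν, Tendsto (fun n => transferOp f hfin φ (ψn n) z) atTop
      (nhds (transferOp f hfin φ ψ z)) :=
  transferOp_ae_tendsto_general f hf hfin ν φ hφ hfix ψ ψn hconv

end
end

section
/- Let g : U → V be a diffeomorphism between open subsets of the Riemann sphere (or of ℝ²), t > 0, K ⊆ U compact, and A ⊆ K a Borel set. Then H^t(g(A)) = ∫_A ‖g'‖^t dH^t, where H^t is the t-dimensional Hausdorff measure and ‖g'(z)‖ the operator norm of the derivative at z (with g conformal, so the derivative is a scalar multiple of an isometry at each point). -/
/-!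
Since `h ∘ g = id`, `g'` does not vanish. Near a point `z`, the mean value inequality and
continuity of `g'` show that `g` multiplies distances by `‖g' z‖` up to a factor `L > 1`, while
`‖g'‖` stays within the factor `L` of `‖g' z‖`. On such a piece `E`, the Lipschitz bounds for `g`
and for its inverse put `μH[t] (g '' E)` and `∫_E ‖g'‖ ^ t dμH[t]` within the factor `L ^ (2 t)`
of each other. Cutting `A` into countably many disjoint such pieces (Lindelöf) and letting
`L → 1` gives the equality.
-/

open MeasureTheory Set Filter Topology Function
open scoped ENNReal NNReal

noncomputable section

section PseudoMetric

variable {X Y : Type*} [PseudoMetricSpace X] [PseudoMetricSpace Y]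

structure IsNearSimilarityOn (f : X → Y) (ρ : X → ℝ≥0) (s : Set X) (a L : ℝ≥0) : Prop where
  dist_le : ∀ x ∈ s, ∀ y ∈ s, dist (f x) (f y) ≤ L * a * dist x y
  le_dist : ∀ x ∈ s, ∀ y ∈ s, a * dist x y ≤ L * dist (f x) (f y)
  le_density : ∀ x ∈ s, a ≤ L * ρ x
  density_le : ∀ x ∈ s, ρ x ≤ L * a

namespace IsNearSimilarityOn

variable {f : X → Y} {ρ : X → ℝ≥0} {s : Set X} {a L : ℝ≥0}

theorem mono (h : IsNearSimilarityOn f ρ s a L) {t : Set X} (hts : t ⊆ s) :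
    IsNearSimilarityOn f ρ t a L where
  dist_le x hx y hy := h.dist_le x (hts hx) y (hts hy)
  le_dist x hx y hy := h.le_dist x (hts hx) y (hts hy)
  le_density x hx := h.le_density x (hts hx)
  density_le x hx := h.density_le x (hts hx)

theorem of_abs_sub_le (hL : 1 < L)
    (hf : ∀ x ∈ s, ∀ y ∈ s,
      |dist (f x) (f y) - a * dist x y| ≤ (1 - (L : ℝ)⁻¹) * a * dist x y)
    (hρ : ∀ x ∈ s, |(ρ x : ℝ) - a| ≤ (1 - (L : ℝ)⁻¹) * a) :
    IsNearSimilarityOn f ρ s a L := by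
  have hL' : (1 : ℝ) < L := hL
  have hLinv : (L : ℝ) * (L : ℝ)⁻¹ = 1 := mul_inv_cancel₀ (by positivity)
  -- With `ε = (1 - L⁻¹) a` we have `L (a - ε) = a`, and `a + ε ≤ L a` is `2 ≤ L + L⁻¹`.
  have hupper : a + (1 - (L : ℝ)⁻¹) * a ≤ L * a := by
    nlinarith [mul_nonneg (mul_nonneg a.2 (inv_nonneg.2 (zero_le_one.trans hL'.le)))
      (sq_nonneg ((L : ℝ) - 1))]
  have hlower : (a : ℝ) = L * (a - (1 - (L : ℝ)⁻¹) * a) := by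
    linear_combination (-(a : ℝ)) * hLinv
  refine ⟨fun x hx y hy => ?_, fun x hx y hy => ?_, fun x hx => ?_, fun x hx => ?_⟩
  · nlinarith [(abs_le.1 (hf x hx y hy)).2, dist_nonneg (x := x) (y := y)]
  · nlinarith [(abs_le.1 (hf x hx y hy)).1, dist_nonneg (x := x) (y := y)]
  · rw [← NNReal.coe_le_coe, NNReal.coe_mul]
    nlinarith [(abs_le.1 (hρ x hx)).1]
  · rw [← NNReal.coe_le_coe, NNReal.coe_mul]
    nlinarith [(abs_le.1 (hρ x hx)).2]

end IsNearSimilarityOn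

end PseudoMetric

theorem ENNReal.le_of_forall_one_lt_le_rpow_mul {x y : ℝ≥0∞} {p : ℝ}
    (h : ∀ L : ℝ≥0, 1 < L → x ≤ (L : ℝ≥0∞) ^ p * y) : x ≤ y := by
  have hpow : Tendsto (fun L : ℝ≥0 => (L : ℝ≥0∞) ^ p) (𝓝[>] 1) (𝓝 1) := by
    have hcont := ((ENNReal.continuous_rpow_const (y := p)).comp ENNReal.continuous_coe).tendsto 1
    simp only [Function.comp_def, ENNReal.coe_one, ENNReal.one_rpow] at hcont
    exact hcont.mono_left nhdsWithin_le_nhds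
  have hlim : Tendsto (fun L : ℝ≥0 => (L : ℝ≥0∞) ^ p * y) (𝓝[>] 1) (𝓝 y) := by
    simpa using ENNReal.Tendsto.mul_const hpow (.inl one_ne_zero)
  exact ge_of_tendsto hlim (eventually_nhdsWithin_of_forall h)

theorem MeasurableSet.exists_partition_of_forall_exists_mem_nhds {X : Type*} [TopologicalSpace X]
    [SecondCountableTopology X] [MeasurableSpace X] [OpensMeasurableSpace X] {A : Set X}
    (hA : MeasurableSet A) (hne : A.Nonempty) {P : Set X → Prop}
    (hP : ∀ ⦃s t⦄, s ⊆ t → P t → P s) (hloc : ∀ x ∈ A, ∃ W ∈ 𝓝 x, P W) :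
    ∃ E : ℕ → Set X, (∀ n, MeasurableSet (E n)) ∧ Pairwise (Disjoint on E) ∧
      ⋃ n, E n = A ∧ ∀ n, P (E n) := by
  choose! W hW hPW using hloc
  obtain ⟨T, hTA, hTc, hcov⟩ := TopologicalSpace.countable_cover_nhdsWithin
    fun x hx => mem_nhdsWithin_of_mem_nhds (interior_mem_nhds.2 (hW x hx))
  obtain ⟨p, rfl⟩ := hTc.exists_eq_range <| by
    obtain ⟨x, hx⟩ := hne
    obtain ⟨y, hy, -⟩ := mem_iUnion₂.1 (hcov hx)
    exact ⟨y, hy⟩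
  refine ⟨disjointed fun n => A ∩ interior (W (p n)),
    MeasurableSet.disjointed fun n => hA.inter isOpen_interior.measurableSet,
    disjoint_disjointed _, ?_, fun n => hP ?_ (hPW (p n) (hTA ⟨n, rfl⟩))⟩
  · rw [iUnion_disjointed, ← inter_iUnion, inter_eq_left]
    simpa only [biUnion_range] using hcov
  · exact (disjointed_subset _ n).trans (inter_subset_right.trans interior_subset)

section Metric

variable {X Y : Type*} [MetricSpace X] [MeasurableSpace X] [BorelSpace X]
  [MetricSpace Y] [MeasurableSpace Y] [BorelSpace Y] {f : X → Y} {d : ℝ}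

theorem hausdorffMeasure_le_mul_hausdorffMeasure_image {s : Set X} {K : ℝ≥0}
    (hf : ∀ x ∈ s, ∀ y ∈ s, dist x y ≤ K * dist (f x) (f y)) (hd : 0 ≤ d) :
    μH[d] s ≤ (K : ℝ≥0∞) ^ d * μH[d] (f '' s) := by
  have hanti : AntilipschitzWith K (s.domRestrict f) :=
    AntilipschitzWith.of_le_mul_dist fun x y => hf x x.2 y y.2
  calc μH[d] s = μH[d] (univ : Set s) := by
        rw [← (isometry_subtype_coe : Isometry ((↑) : s → X)).hausdorffMeasure_image (.inl hd),
          image_univ, Subtype.range_coe]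
    _ ≤ (K : ℝ≥0∞) ^ d * μH[d] (s.domRestrict f '' univ) :=
        hanti.le_hausdorffMeasure_image hd univ
    _ = (K : ℝ≥0∞) ^ d * μH[d] (f '' s) := by rw [image_univ, range_domRestrict]

namespace IsNearSimilarityOn

variable {ρ : X → ℝ≥0} {s : Set X} {a L : ℝ≥0}

theorem hausdorffMeasure_image_le (h : IsNearSimilarityOn f ρ s a L) (hs : MeasurableSet s)
    (hd : 0 ≤ d) :
    μH[d] (f '' s) ≤ (L : ℝ≥0∞) ^ (2 * d) * ∫⁻ x in s, (ρ x : ℝ≥0∞) ^ d ∂μH[d] := by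
  have hlip : LipschitzOnWith (L * a) f s :=
    .of_dist_le_mul fun x hx y hy => by exact_mod_cast h.dist_le x hx y hy
  calc μH[d] (f '' s) ≤ ((L * a : ℝ≥0) : ℝ≥0∞) ^ d * μH[d] s := hlip.hausdorffMeasure_image_le hd
    _ = (L : ℝ≥0∞) ^ d * ∫⁻ _ in s, (a : ℝ≥0∞) ^ d ∂μH[d] := by
      rw [setLIntegral_const, ENNReal.coe_mul, ENNReal.mul_rpow_of_nonneg _ _ hd, mul_assoc]
    _ ≤ (L : ℝ≥0∞) ^ d * ∫⁻ x in s, ((L : ℝ≥0∞) * ρ x) ^ d ∂μH[d] := by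
      gcongr (L : ℝ≥0∞) ^ d * ?_
      refine setLIntegral_mono' hs fun x hx => ?_
      gcongr
      exact_mod_cast h.le_density x hx
    _ = (L : ℝ≥0∞) ^ (2 * d) * ∫⁻ x in s, (ρ x : ℝ≥0∞) ^ d ∂μH[d] := by
      simp_rw [ENNReal.mul_rpow_of_nonneg _ _ hd]
      rw [lintegral_const_mul' _ _ (ENNReal.rpow_ne_top_of_nonneg hd ENNReal.coe_ne_top),
        ← mul_assoc, two_mul, ENNReal.rpow_add_of_nonneg _ _ hd hd]

theorem lintegral_le_hausdorffMeasure_image (h : IsNearSimilarityOn f ρ s a L) (ha : a ≠ 0)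
    (hs : MeasurableSet s) (hd : 0 ≤ d) :
    ∫⁻ x in s, (ρ x : ℝ≥0∞) ^ d ∂μH[d] ≤ (L : ℝ≥0∞) ^ (2 * d) * μH[d] (f '' s) := by
  have hinv : μH[d] s ≤ ((L / a : ℝ≥0) : ℝ≥0∞) ^ d * μH[d] (f '' s) := by
    refine hausdorffMeasure_le_mul_hausdorffMeasure_image (fun x hx y hy => ?_) hd
    rw [NNReal.coe_div, div_mul_eq_mul_div, le_div_iff₀ (by positivity), mul_comm]
    exact h.le_dist x hx y hy
  calc ∫⁻ x in s, (ρ x : ℝ≥0∞) ^ d ∂μH[d] ≤ ∫⁻ _ in s, ((L * a : ℝ≥0) : ℝ≥0∞) ^ d ∂μH[d] :=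
        setLIntegral_mono' hs fun x hx => by gcongr; exact_mod_cast h.density_le x hx
    _ ≤ ((L * a : ℝ≥0) : ℝ≥0∞) ^ d * (((L / a : ℝ≥0) : ℝ≥0∞) ^ d * μH[d] (f '' s)) := by
      rw [setLIntegral_const]
      gcongr
    _ = (L : ℝ≥0∞) ^ (2 * d) * μH[d] (f '' s) := by
      have hLL : L * a * (L / a) = L * L := by field_simp
      rw [← mul_assoc, ← ENNReal.mul_rpow_of_nonneg _ _ hd, ← ENNReal.coe_mul, hLL,
        ENNReal.coe_mul, ENNReal.mul_rpow_of_nonneg _ _ hd, two_mul,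
        ENNReal.rpow_add_of_nonneg _ _ hd hd]

end IsNearSimilarityOn

theorem hausdorffMeasure_image_eq_lintegral_of_isNearSimilarityOn [SecondCountableTopology X]
    {ρ : X → ℝ≥0} {A : Set X} (hd : 0 ≤ d) (hA : MeasurableSet A) (hinj : InjOn f A)
    (himg : ∀ E ⊆ A, MeasurableSet E → MeasurableSet (f '' E))
    (hloc : ∀ L : ℝ≥0, 1 < L → ∀ x ∈ A, ∃ W ∈ 𝓝 x, ∃ a ≠ 0, IsNearSimilarityOn f ρ W a L) :
    μH[d] (f '' A) = ∫⁻ x in A, (ρ x : ℝ≥0∞) ^ d ∂μH[d] := by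
  rcases A.eq_empty_or_nonempty with rfl | hne
  · simp
  have hpart (L : ℝ≥0) (hL : 1 < L) :=
    MeasurableSet.exists_partition_of_forall_exists_mem_nhds hA hne
      (fun _ _ hst ⟨a, ha, h⟩ => ⟨a, ha, h.mono hst⟩) (hloc L hL)
  apply le_antisymm <;> refine ENNReal.le_of_forall_one_lt_le_rpow_mul (p := 2 * d) fun L hL => ?_
  all_goals
    obtain ⟨E, hEm, hEd, hEA, hE⟩ := hpart L hL
    choose a ha hEsim using hE
    subst hEA
  · calc μH[d] (f '' ⋃ n, E n) ≤ ∑' n, μH[d] (f '' E n) := by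
          rw [image_iUnion]; exact measure_iUnion_le _
      _ ≤ ∑' n, (L : ℝ≥0∞) ^ (2 * d) * ∫⁻ x in E n, (ρ x : ℝ≥0∞) ^ d ∂μH[d] :=
          ENNReal.tsum_le_tsum fun n => (hEsim n).hausdorffMeasure_image_le (hEm n) hd
      _ = _ := by rw [ENNReal.tsum_mul_left, lintegral_iUnion hEm hEd]
  · have hdisj : Pairwise (Disjoint on fun n => f '' E n) := fun m n hmn => by
      rw [Function.onFun, disjoint_iff_inter_eq_empty,
        ← hinj.image_inter (subset_iUnion _ m) (subset_iUnion _ n),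
        disjoint_iff_inter_eq_empty.1 (hEd hmn), image_empty]
    calc ∫⁻ x in ⋃ n, E n, (ρ x : ℝ≥0∞) ^ d ∂μH[d]
        = ∑' n, ∫⁻ x in E n, (ρ x : ℝ≥0∞) ^ d ∂μH[d] := lintegral_iUnion hEm hEd _
      _ ≤ ∑' n, (L : ℝ≥0∞) ^ (2 * d) * μH[d] (f '' E n) := ENNReal.tsum_le_tsum fun n =>
          (hEsim n).lintegral_le_hausdorffMeasure_image (ha n) (hEm n) hd
      _ = _ := by
        rw [ENNReal.tsum_mul_left, image_iUnion,
          measure_iUnion hdisj fun n => himg _ (subset_iUnion _ n) (hEm n)]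

end Metric

theorem HasDerivAt.ne_zero_of_eventually_leftInverse {𝕜 F : Type*} [NontriviallyNormedField 𝕜]
    [NormedAddCommGroup F] [NormedSpace 𝕜 F] {g : 𝕜 → F} {h : F → 𝕜} {z : 𝕜} {w : F}
    (hg : HasDerivAt g w z) (hh : DifferentiableAt 𝕜 h (g z)) (hinv : ∀ᶠ ζ in 𝓝 z, h (g ζ) = ζ) :
    w ≠ 0 := by
  have hid : HasDerivAt (h ∘ g) 1 z := (hasDerivAt_id z).congr_of_eventuallyEq hinv
  intro hw
  simpa [hw] using (hh.hasFDerivAt.comp_hasDerivAt z hg).unique hid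

section Deriv

variable {𝕜 F : Type*} [RCLike 𝕜] [NormedAddCommGroup F] [NormedSpace 𝕜 F] {g g' : 𝕜 → F}

theorem abs_dist_sub_norm_mul_dist_le {s : Set 𝕜} {w : F} {ε : ℝ} (hs : Convex ℝ s)
    (hg : ∀ ζ ∈ s, HasDerivWithinAt g (g' ζ) s ζ) (hε : ∀ ζ ∈ s, ‖g' ζ - w‖ ≤ ε)
    {u v : 𝕜} (hu : u ∈ s) (hv : v ∈ s) :
    |dist (g u) (g v) - ‖w‖ * dist u v| ≤ ε * dist u v := by
  have hmvt : ‖(g u - u • w) - (g v - v • w)‖ ≤ ε * ‖u - v‖ :=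
    hs.norm_image_sub_le_of_norm_hasDerivWithin_le (f := fun ζ => g ζ - ζ • w)
      (fun ζ hζ => by simpa using (hg ζ hζ).fun_sub ((hasDerivWithinAt_id ζ s).smul_const w))
      hε hv hu
  calc |dist (g u) (g v) - ‖w‖ * dist u v| = |‖g u - g v‖ - ‖(u - v) • w‖| := by
        rw [dist_eq_norm, dist_eq_norm, norm_smul, mul_comm]
    _ ≤ ‖(g u - u • w) - (g v - v • w)‖ := by
        rw [sub_smul, sub_sub_sub_comm]; exact abs_norm_sub_norm_le _ _
    _ ≤ ε * dist u v := by rw [dist_eq_norm]; exact hmvt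

theorem exists_isNearSimilarityOn_of_continuousAt {z : 𝕜} {L : ℝ≥0}
    (hg : ∀ᶠ ζ in 𝓝 z, HasDerivAt g (g' ζ) ζ) (hg' : ContinuousAt g' z) (hz : g' z ≠ 0)
    (hL : 1 < L) :
    ∃ W ∈ 𝓝 z, IsNearSimilarityOn g (fun ζ => ‖g' ζ‖₊) W ‖g' z‖₊ L := by
  set ε := (1 - (L : ℝ)⁻¹) * ‖g' z‖
  have hε : 0 < ε := mul_pos (sub_pos.2 (inv_lt_one_of_one_lt₀ hL)) (norm_pos_iff.2 hz)
  obtain ⟨r, hr, hball⟩ := Metric.eventually_nhds_iff_ball.1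
    (hg.and (hg'.eventually (Metric.closedBall_mem_nhds (g' z) hε)))
  have hclose (ζ) (hζ : ζ ∈ Metric.ball z r) : ‖g' ζ - g' z‖ ≤ ε := by
    rw [← dist_eq_norm]; exact (hball ζ hζ).2
  refine ⟨Metric.ball z r, Metric.ball_mem_nhds z hr, .of_abs_sub_le hL (fun u hu v hv => ?_)
    fun ζ hζ => ?_⟩
  · exact abs_dist_sub_norm_mul_dist_le (convex_ball z r)
      (fun ζ hζ => (hball ζ hζ).1.hasDerivWithinAt) hclose hu hv
  · exact (abs_norm_sub_norm_le _ _).trans (hclose ζ hζ)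

end Deriv

theorem hausdorff_change_of_variables_general
    (U V : Set ℂ) (hU : IsOpen U) (hV : IsOpen V)
    (g h : ℂ → ℂ) (g' : ℂ → ℂ)
    (hbij : Set.BijOn g U V) (hinv : Set.InvOn h g U V)
    (hg : ∀ z ∈ U, HasDerivAt g (g' z) z)
    (hh : DifferentiableOn ℂ h V)
    (t : ℝ) (ht : 0 < t)
    (K : Set ℂ) (hKU : K ⊆ U)
    (A : Set ℂ) (hA : A ⊆ K) (hAm : MeasurableSet A) :
    μH[t] (g '' A)
      = ∫⁻ z in A, ENNReal.ofReal (‖g' z‖ ^ t) ∂(μH[t]) := by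
  have hAU : A ⊆ U := hA.trans hKU
  have hgU : DifferentiableOn ℂ g U := fun z hz => (hg z hz).differentiableAt.differentiableWithinAt
  have hg'U : ContinuousOn g' U :=
    (hgU.analyticOnNhd hU).deriv.continuousOn.congr fun z hz => (hg z hz).deriv.symm
  have hg'ne (z) (hz : z ∈ U) : g' z ≠ 0 :=
    (hg z hz).ne_zero_of_eventually_leftInverse (hh.differentiableAt (hV.mem_nhds (hbij.mapsTo hz)))
      (eventually_of_mem (hU.mem_nhds hz) hinv.1)
  have hinj : InjOn g U := hinv.1.injOn
  simp_rw [← ENNReal.ofReal_rpow_of_nonneg (norm_nonneg _) ht.le, ofReal_norm, enorm_eq_nnnorm]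
  refine hausdorffMeasure_image_eq_lintegral_of_isNearSimilarityOn ht.le hAm (hinj.mono hAU)
    (fun E hE hEm => hEm.image_of_continuousOn_injOn (hgU.continuousOn.mono (hE.trans hAU))
      (hinj.mono (hE.trans hAU))) fun L hL z hz => ?_
  obtain ⟨W, hW, hWsim⟩ := exists_isNearSimilarityOn_of_continuousAt
    (eventually_of_mem (hU.mem_nhds (hAU hz)) hg) (hg'U.continuousAt (hU.mem_nhds (hAU hz)))
    (hg'ne z (hAU hz)) hL
  exact ⟨W, hW, _, nnnorm_ne_zero_iff.2 (hg'ne z (hAU hz)), hWsim⟩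

/-- Change of variables for Hausdorff measure under a conformal diffeomorphism
`g : U → V` between open subsets of `ℂ ≅ ℝ²`: for every compact `K ⊆ U` and
every Borel set `A ⊆ K`, `H^t(g(A)) = ∫_A ‖g'‖^t dH^t`. -/
theorem hausdorff_change_of_variables
    (U V : Set ℂ) (hU : IsOpen U) (hV : IsOpen V)
    (g h : ℂ → ℂ) (g' : ℂ → ℂ)
    (hbij : Set.BijOn g U V) (hinv : Set.InvOn h g U V)
    (hg : ∀ z ∈ U, HasDerivAt g (g' z) z)
    (hh : DifferentiableOn ℂ h V)
    (t : ℝ) (ht : 0 < t)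
    (K : Set ℂ) (hK : IsCompact K) (hKU : K ⊆ U)
    (A : Set ℂ) (hA : A ⊆ K) (hAm : MeasurableSet A) :
    μH[t] (g '' A)
      = ∫⁻ z in A, ENNReal.ofReal (‖g' z‖ ^ t) ∂(μH[t]) :=
  hausdorff_change_of_variables_general U V hU hV g h g' hbij hinv hg hh t ht K hKU A hA hAm
end
end
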